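/- A ring R is almost Armendariz if and only if the Laurent polynomial ring R[x, x⁻¹] is almost Armendariz. -/

import Mathlib

/-- An element `a` of a ring `R` is *strongly nilpotent* if every sequence
`a₀ = a`, `aₙ₊₁ ∈ aₙ R aₙ` is eventually zero. -/
def IsStronglyNilpotent {R : Type*} [Ring R] (a : R) : Prop :=
  ∀ s : ℕ → R, s 0 = a → (∀ n : ℕ, ∃ r : R, s (n + 1) = s n * r * s n) → ∃ n : ℕ, s n = 0

/-- The prime radical `P(R)` of a ring `R`: the intersection of all prime two-sided
ideals of `R`, equivalently the set of strongly nilpotent elements of `R`. -/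
def primeRadical (R : Type*) [Ring R] : Set R :=
  {a : R | IsStronglyNilpotent a}

/-- A ring `R` is *almost Armendariz* if whenever `f, g ∈ R[x]` satisfy `f g = 0`, every
product of a coefficient of `f` with a coefficient of `g` lies in the prime radical `P(R)`. -/
def IsAlmostArmendariz (R : Type*) [Ring R] : Prop :=
  ∀ f g : Polynomial R, f * g = 0 → ∀ i j : ℕ, f.coeff i * g.coeff j ∈ primeRadical R

/-!
Multiplying by powers of `x` clears denominators: `F xⁿ` and `G xᵐ` come from `A, B ∈ R[x][y]`
with `A B = 0`. The Kronecker substitution `y ↦ x^k`, with `k` beyond every `x`-degree, keeps the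
coefficients of `A` and `B` apart, so almost Armendariz for `R` puts the product of any
`x`-coefficient of `A_i` with any `x`-coefficient of `B_j` in `P(R)`. Hence
`F_i G_j = A_i B_j x^{-n-m}` lies in `P(R)[x, x⁻¹] ⊆ P(R[x, x⁻¹])`; the inclusion holds because a
prime of `R[x, x⁻¹]` contracts to a prime of `R`, once strong nilpotence is identified (by Zorn)
with lying in every prime. Conversely, `R ⊆ R[x, x⁻¹]` and strong nilpotence descends to subrings.
-/

namespace TwoSidedIdeal

variable {R : Type*} [NonUnitalRing R]

/-- Primeness in the noncommutative sense (`a R b ⊆ P` forces `a ∈ P` or `b ∈ P`), not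
Mathlib's completely prime `Ideal.IsPrime`. -/
def IsPrime (P : TwoSidedIdeal R) : Prop :=
  P ≠ ⊤ ∧ ∀ a b : R, (∀ r, a * r * b ∈ P) → a ∈ P ∨ b ∈ P

theorem mul_mul_mem_of_mem_sup_span_right {I : TwoSidedIdeal R} {x y v : R}
    (h : ∀ r, x * r * y ∈ I) (hv : v ∈ I ⊔ span {y}) (r : R) : x * r * v ∈ I := by
  let J : TwoSidedIdeal R := .mk' {v | ∀ r, x * r * v ∈ I}
    (fun r => by simp)
    (fun ha hb r => by simpa [mul_add] using I.add_mem (ha r) (hb r))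
    (fun ha r => by simpa using I.neg_mem (ha r))
    (fun {a _} hv r => by simpa [mul_assoc] using hv (r * a))
    (fun {_ a} hv r => by simpa [mul_assoc] using I.mul_mem_right _ a (hv r))
  have mem_J (v : R) : v ∈ J ↔ ∀ r, x * r * v ∈ I := mem_mk' ..
  have hJ : I ⊔ span {y} ≤ J :=
    sup_le (fun v hv => (mem_J v).2 fun r => I.mul_mem_left _ _ hv)
      (span_le.2 (Set.singleton_subset_iff.2 ((mem_J y).2 h)))
  exact (mem_J v).1 (hJ hv) r

theorem mul_mul_mem_of_mem_sup_span {I : TwoSidedIdeal R} {x y u v : R}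
    (h : ∀ r, x * r * y ∈ I) (hu : u ∈ I ⊔ span {x}) (hv : v ∈ I ⊔ span {y}) (r : R) :
    u * r * v ∈ I := by
  let J : TwoSidedIdeal R := .mk' {u | ∀ r, u * r * v ∈ I}
    (fun r => by simp)
    (fun ha hb r => by simpa [add_mul] using I.add_mem (ha r) (hb r))
    (fun ha r => by simpa using I.neg_mem (ha r))
    (fun {a _} hu r => by simpa [mul_assoc] using I.mul_mem_left a _ (hu r))
    (fun {_ a} hu r => by simpa [mul_assoc] using hu (a * r))
  have mem_J (u : R) : u ∈ J ↔ ∀ r, u * r * v ∈ I := mem_mk' ..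
  have hJ : I ⊔ span {x} ≤ J :=
    sup_le (fun u hu => (mem_J u).2 fun r => I.mul_mem_right _ _ (I.mul_mem_right _ _ hu))
      (span_le.2 (Set.singleton_subset_iff.2
        ((mem_J x).2 (mul_mul_mem_of_mem_sup_span_right h hv))))
  exact (mem_J u).1 (hJ hu) r

theorem exists_maximal_disjoint {S : Set R} (hS : (0 : R) ∉ S) :
    ∃ M : TwoSidedIdeal R, Maximal (fun J : TwoSidedIdeal R => Disjoint (J : Set R) S) M := by
  let 𝒮 : Set (TwoSidedIdeal R) := {J | Disjoint (J : Set R) S}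
  have chain_bound : ∀ c ⊆ 𝒮, IsChain (· ≤ ·) c → ∀ J ∈ c, ∃ U ∈ 𝒮, ∀ I ∈ c, I ≤ U := by
    intro c hcS hc J hJ
    have hdir := hc.directedOn
    let U : TwoSidedIdeal R := .mk' (⋃ I ∈ c, (I : Set R))
      (Set.mem_biUnion hJ J.zero_mem)
      (fun hx hy => by
        obtain ⟨I₁, h₁, hx⟩ := Set.mem_iUnion₂.1 hx
        obtain ⟨I₂, h₂, hy⟩ := Set.mem_iUnion₂.1 hy
        obtain ⟨I, hI, hI₁, hI₂⟩ := hdir I₁ h₁ I₂ h₂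
        exact Set.mem_biUnion hI (I.add_mem (hI₁ hx) (hI₂ hy)))
      (fun hx => by
        obtain ⟨I, hI, hx⟩ := Set.mem_iUnion₂.1 hx
        exact Set.mem_biUnion hI (I.neg_mem hx))
      (fun hy => by
        obtain ⟨I, hI, hy⟩ := Set.mem_iUnion₂.1 hy
        exact Set.mem_biUnion hI (I.mul_mem_left _ _ hy))
      (fun hx => by
        obtain ⟨I, hI, hx⟩ := Set.mem_iUnion₂.1 hx
        exact Set.mem_biUnion hI (I.mul_mem_right _ _ hx))
    refine ⟨U, ?_, fun I hI x hx => (mem_mk' ..).2 (Set.mem_biUnion hI hx)⟩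
    rw [Set.mem_ofPred_eq, coe_mk', Set.disjoint_iUnion₂_left]
    exact fun I hI => hcS hI
  obtain ⟨M, -, hM⟩ := zorn_le_nonempty₀ 𝒮 chain_bound ⊥ (by simpa [𝒮, coe_bot] using hS)
  exact ⟨M, hM⟩

theorem isPrime_of_maximal_disjoint_range {s : ℕ → R}
    (hs : ∀ n, ∃ r, s (n + 1) = s n * r * s n) {M : TwoSidedIdeal R}
    (hM : Maximal (fun J : TwoSidedIdeal R => Disjoint (J : Set R) (Set.range s)) M) :
    M.IsPrime := by
  have tail (J : TwoSidedIdeal R) {m n : ℕ} (hmn : m ≤ n) (hm : s m ∈ J) : s n ∈ J := by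
    induction n, hmn using Nat.le_induction with
    | base => exact hm
    | succ n _ ih =>
      obtain ⟨r, hr⟩ := hs n
      exact hr ▸ J.mul_mem_right _ _ (J.mul_mem_right _ _ ih)
  have meets (x : R) (hx : x ∉ M) : ∃ m, s m ∈ M ⊔ span {x} := by
    by_contra! h
    refine hx (hM.2 (Set.disjoint_right.2 ?_) le_sup_left
      (mem_sup_right (subset_span (Set.mem_singleton x))))
    rintro _ ⟨m, rfl⟩
    exact h m
  have avoid (n : ℕ) : s n ∉ M := fun h => Set.disjoint_left.1 hM.1 h ⟨n, rfl⟩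
  refine ⟨fun htop => avoid 0 (htop ▸ mem_top R), fun x y h => ?_⟩
  by_contra! hxy
  obtain ⟨m, hm⟩ := meets x hxy.1
  obtain ⟨n, hn⟩ := meets y hxy.2
  obtain ⟨r, hr⟩ := hs (max m n)
  exact avoid _ <| hr ▸ mul_mul_mem_of_mem_sup_span h
    (tail _ (le_max_left m n) hm) (tail _ (le_max_right m n) hn) r

end TwoSidedIdeal

section StronglyNilpotent

variable {R : Type*} [Ring R]

theorem IsStronglyNilpotent.mem_of_isPrime {a : R} (ha : IsStronglyNilpotent a)
    {P : TwoSidedIdeal R} (hP : P.IsPrime) : a ∈ P := by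
  by_contra haP
  have step (x : {x // x ∉ P}) : ∃ r, x.1 * r * x.1 ∉ P := by
    by_contra! h
    exact (hP.2 x x h).elim x.2 x.2
  choose r hr using step
  let t : ℕ → {x // x ∉ P} := fun n => n.rec ⟨a, haP⟩ fun _ x => ⟨x.1 * r x * x.1, hr x⟩
  obtain ⟨n, hn⟩ := ha (fun n => (t n).1) rfl fun n => ⟨r (t n), rfl⟩
  exact (t n).2 (hn ▸ P.zero_mem)

theorem isStronglyNilpotent_iff_forall_isPrime {a : R} :
    IsStronglyNilpotent a ↔ ∀ P : TwoSidedIdeal R, P.IsPrime → a ∈ P := by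
  refine ⟨fun ha P hP => ha.mem_of_isPrime hP, fun h s hs0 hs => ?_⟩
  by_contra! hne
  obtain ⟨M, hM⟩ := TwoSidedIdeal.exists_maximal_disjoint (S := Set.range s)
    fun ⟨n, hn⟩ => hne n hn
  exact Set.disjoint_left.1 hM.1 (h M (TwoSidedIdeal.isPrime_of_maximal_disjoint_range hs hM))
    ⟨0, hs0⟩

theorem IsStronglyNilpotent.of_map {S : Type*} [Ring S] {f : R →+* S}
    (hf : Function.Injective f) {a : R} (h : IsStronglyNilpotent (f a)) :
    IsStronglyNilpotent a := by
  intro s hs0 hs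
  obtain ⟨n, hn⟩ := h (f ∘ s) (congrArg f hs0) fun n => by
    obtain ⟨r, hr⟩ := hs n
    exact ⟨f r, by simp [hr]⟩
  exact ⟨n, hf (by simpa using hn)⟩

variable (R) in
def TwoSidedIdeal.primeRadical : TwoSidedIdeal R :=
  ⨅ P : {P : TwoSidedIdeal R // P.IsPrime}, P.1

theorem TwoSidedIdeal.coe_primeRadical :
    (TwoSidedIdeal.primeRadical R : Set R) = _root_.primeRadical R := by
  ext a
  simp [TwoSidedIdeal.primeRadical, TwoSidedIdeal.mem_iInf, _root_.primeRadical,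
    isStronglyNilpotent_iff_forall_isPrime]

end StronglyNilpotent

section Laurent

open scoped Polynomial
open LaurentPolynomial

variable {R : Type*} [Ring R]

theorem IsAlmostArmendariz.of_injective {S : Type*} [Ring S] {f : R →+* S}
    (hf : Function.Injective f) (hS : IsAlmostArmendariz S) : IsAlmostArmendariz R := by
  intro p q hpq i j
  have h := hS (p.map f) (q.map f) (by rw [← Polynomial.map_mul, hpq, Polynomial.map_zero]) i j
  rw [Polynomial.coeff_map, Polynomial.coeff_map, ← map_mul] at h
  exact IsStronglyNilpotent.of_map hf h

theorem LaurentPolynomial.C_injective : Function.Injective (C : R → R[T;T⁻¹]) :=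
  fun a b h => Polynomial.C_injective <| Polynomial.toLaurent_injective (by simpa using h)

theorem TwoSidedIdeal.IsPrime.comap_C {Q : TwoSidedIdeal R[T;T⁻¹]} (hQ : Q.IsPrime) :
    (Q.comap (C : R →+* R[T;T⁻¹])).IsPrime := by
  refine ⟨fun htop => hQ.1 ?_, fun x y hxy => ?_⟩
  · rw [← Q.one_mem_iff, ← map_one C, ← TwoSidedIdeal.mem_comap C, htop]
    exact TwoSidedIdeal.mem_top _
  have key (q : R[T;T⁻¹]) : C x * q * C y ∈ Q := by
    induction q using LaurentPolynomial.induction_on' with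
    | add p q hp hq => simpa [mul_add, add_mul] using Q.add_mem hp hq
    | C_mul_T n a =>
      rw [mul_assoc (C x), mul_assoc (C a), (commute_T n (C y)).eq, ← mul_assoc, ← mul_assoc,
        ← map_mul, ← map_mul]
      exact Q.mul_mem_right _ _ ((TwoSidedIdeal.mem_comap _).1 (hxy a))
  simpa only [TwoSidedIdeal.mem_comap C] using hQ.2 _ _ key

theorem toLaurent_mul_T_mem_primeRadical {p : R[X]} (hp : ∀ n, p.coeff n ∈ primeRadical R)
    (m : ℤ) : Polynomial.toLaurent p * T m ∈ primeRadical R[T;T⁻¹] := by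
  rw [← TwoSidedIdeal.coe_primeRadical, SetLike.mem_coe, TwoSidedIdeal.primeRadical,
    TwoSidedIdeal.mem_iInf]
  rintro ⟨Q, hQ⟩
  have hC (n : ℕ) : C (p.coeff n) ∈ Q := (TwoSidedIdeal.mem_comap _).1 <|
    (isStronglyNilpotent_iff_forall_isPrime.1 (hp n)) _ hQ.comap_C
  refine Q.mul_mem_right _ _ ?_
  rw [← p.sum_monomial_eq, Polynomial.sum, map_sum]
  exact sum_mem fun n _ =>
    Polynomial.toLaurent_C_mul_T n (p.coeff n) ▸ Q.mul_mem_right _ _ (hC n)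

end Laurent

section ClearingDenominators

open scoped Polynomial
open LaurentPolynomial

variable {R : Type*} [Semiring R]

theorem exists_map_toLaurent_eq_mul_C_T (F : R[T;T⁻¹][X]) :
    ∃ (N : ℕ) (A : R[X][X]), A.map Polynomial.toLaurent = F * Polynomial.C (T N) := by
  induction F using Polynomial.induction_on' with
  | monomial n f =>
    obtain ⟨N, f', hf'⟩ := exists_T_pow f
    exact ⟨N, Polynomial.monomial n f', by
      rw [Polynomial.map_monomial, hf', Polynomial.monomial_mul_C]⟩
  | add F G hF hG =>
    obtain ⟨N₁, A, hA⟩ := hF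
    obtain ⟨N₂, B, hB⟩ := hG
    refine ⟨N₁ + N₂,
      A * Polynomial.C (Polynomial.X ^ N₂) + B * Polynomial.C (Polynomial.X ^ N₁), ?_⟩
    simp only [Polynomial.map_add, Polynomial.map_mul, Polynomial.map_C, hA, hB,
      Polynomial.toLaurent_X_pow, mul_assoc, ← Polynomial.C_mul, ← T_add, add_mul]
    push_cast
    rw [add_comm (N₂ : ℤ)]

theorem Polynomial.commute_C_T (n : ℤ) (F : R[T;T⁻¹][X]) : Commute (Polynomial.C (T n)) F :=
  Polynomial.ext fun i => by
    rw [Polynomial.coeff_C_mul, Polynomial.coeff_mul_C, (commute_T n _).eq]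

variable {A B : R[X][X]} {F G : R[T;T⁻¹][X]} {a b : ℤ}

theorem mul_eq_zero_of_map_toLaurent (hA : A.map Polynomial.toLaurent = F * Polynomial.C (T a))
    (hB : B.map Polynomial.toLaurent = G * Polynomial.C (T b)) (hFG : F * G = 0) : A * B = 0 :=
  Polynomial.map_injective _ Polynomial.toLaurent_injective <| by
    rw [Polynomial.map_mul, hA, hB, mul_assoc, ← mul_assoc (Polynomial.C _),
      (Polynomial.commute_C_T _ G).eq, ← mul_assoc, ← mul_assoc, hFG, zero_mul, zero_mul,
      Polynomial.map_zero]

theorem coeff_mul_coeff_eq_toLaurent_mul_T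
    (hA : A.map Polynomial.toLaurent = F * Polynomial.C (T a))
    (hB : B.map Polynomial.toLaurent = G * Polynomial.C (T b)) (i j : ℕ) :
    F.coeff i * G.coeff j = Polynomial.toLaurent (A.coeff i * B.coeff j) * T (-(a + b)) := by
  have hF : Polynomial.toLaurent (A.coeff i) = F.coeff i * T a := by
    simpa using congrArg (Polynomial.coeff · i) hA
  have hG : Polynomial.toLaurent (B.coeff j) = G.coeff j * T b := by
    simpa using congrArg (Polynomial.coeff · j) hB
  rw [map_mul, hF, hG]
  simp only [mul_assoc, ← T_add]
  rw [(commute_T _ _).left_comm, ← T_add, show a + (b + -(a + b)) = 0 by ring, T_zero, mul_one]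

end ClearingDenominators

section Kronecker

open scoped Polynomial

variable {R : Type*} [Semiring R]

theorem exists_natDegree_coeff_lt (A : R[X][X]) : ∃ k, ∀ i, (A.coeff i).natDegree < k := by
  refine ⟨(A.support.sup fun i => (A.coeff i).natDegree) + 1, fun i => Nat.lt_succ_of_le ?_⟩
  by_cases hi : i ∈ A.support
  · exact Finset.le_sup (f := fun i => (A.coeff i).natDegree) hi
  · simp [Polynomial.notMem_support_iff.1 hi]

theorem coeff_eval₂_X_pow_mul_add (A : R[X][X]) {k : ℕ}
    (hk : ∀ i, (A.coeff i).natDegree < k) (i : ℕ) {s : ℕ} (hs : s < k) :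
    (A.eval₂ (RingHom.id _) (Polynomial.X ^ k)).coeff (k * i + s) = (A.coeff i).coeff s := by
  rw [Polynomial.eval₂_eq_sum, Polynomial.sum_def, Polynomial.finsetSum_coeff,
    Finset.sum_eq_single i]
  · simp [← pow_mul, Polynomial.coeff_mul_X_pow']
  · intro i' _ hne
    rw [RingHom.id_apply, ← pow_mul, Polynomial.coeff_mul_X_pow']
    rcases lt_or_gt_of_ne hne with hlt | hgt
    · have : k * i' + k ≤ k * i := by simpa [Nat.mul_succ] using Nat.mul_le_mul_left k hlt
      rw [if_pos (by omega)]
      exact Polynomial.coeff_eq_zero_of_natDegree_lt (by have := hk i'; omega)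
    · have : k * i + k ≤ k * i' := by simpa [Nat.mul_succ] using Nat.mul_le_mul_left k hgt
      rw [if_neg (by omega)]
  · intro hi
    simp [Polynomial.notMem_support_iff.1 hi]

end Kronecker

open scoped Polynomial in
theorem IsAlmostArmendariz.coeff_mul_coeff_mem {R : Type*} [Ring R] (hR : IsAlmostArmendariz R)
    {A B : R[X][X]} (hAB : A * B = 0) (i j n : ℕ) :
    (A.coeff i * B.coeff j).coeff n ∈ primeRadical R := by
  obtain ⟨kA, hkA⟩ := exists_natDegree_coeff_lt A
  obtain ⟨kB, hkB⟩ := exists_natDegree_coeff_lt B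
  set k := kA + kB
  have hA (i : ℕ) : (A.coeff i).natDegree < k := (hkA i).trans_le (Nat.le_add_right _ _)
  have hB (j : ℕ) : (B.coeff j).natDegree < k := (hkB j).trans_le (Nat.le_add_left _ _)
  let e : R[X][X] →+* R[X] := Polynomial.eval₂RingHom' (RingHom.id _) (Polynomial.X ^ k)
    fun a => (Polynomial.commute_X_pow a k).symm
  have he := hR (e A) (e B) (by rw [← map_mul, hAB, map_zero])
  rw [← TwoSidedIdeal.coe_primeRadical] at he ⊢
  have hcoeff (s t : ℕ) :
      (A.coeff i).coeff s * (B.coeff j).coeff t ∈ TwoSidedIdeal.primeRadical R := by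
    rcases lt_or_ge s k with hs | hs
    · rcases lt_or_ge t k with ht | ht
      · rw [← coeff_eval₂_X_pow_mul_add A hA i hs, ← coeff_eval₂_X_pow_mul_add B hB j ht]
        exact he _ _
      · rw [Polynomial.coeff_eq_zero_of_natDegree_lt ((hB j).trans_le ht), mul_zero]
        exact zero_mem _
    · rw [Polynomial.coeff_eq_zero_of_natDegree_lt ((hA i).trans_le hs), zero_mul]
      exact zero_mem _
  rw [Polynomial.coeff_mul]
  exact sum_mem fun p _ => hcoeff p.1 p.2

/-- A ring `R` is almost Armendariz if and only if the Laurent polynomial ring `R[x, x⁻¹]`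
is almost Armendariz. -/
theorem almostArmendariz_iff_laurent {R : Type*} [Ring R] :
    IsAlmostArmendariz R ↔ IsAlmostArmendariz (LaurentPolynomial R) := by
  refine ⟨fun hR F G hFG i j => ?_, IsAlmostArmendariz.of_injective LaurentPolynomial.C_injective⟩
  obtain ⟨N₁, A, hA⟩ := exists_map_toLaurent_eq_mul_C_T F
  obtain ⟨N₂, B, hB⟩ := exists_map_toLaurent_eq_mul_C_T G
  rw [coeff_mul_coeff_eq_toLaurent_mul_T hA hB]
  exact toLaurent_mul_T_mem_primeRadical
    (hR.coeff_mul_coeff_mem (mul_eq_zero_of_map_toLaurent hA hB hFG) i j) _
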